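/- arXiv:2304.07529 — 2 statements merged into one kernel-verified Lean document; each statement's English description precedes it below -/
import Mathlib

section
/- Let p be a prime, e > 2, and M any duality on (F_{p^e}, +). Then there exists a nontrivial additive code C of length 1 over F_{p^e} (i.e., {0} ≠ C ≠ F_{p^e}) with C ∩ C^M = {0}. -/
/-- A duality `M` on a finite abelian group `G`: an isomorphism `x ↦ χ_x`
from `G` onto its character group `Hom(G, ℂ*)`. -/
structure Duality (G : Type*) [AddCommGroup G] where
  χ : G → G → ℂˣ
  add_left : ∀ x y z : G, χ (x + y) z = χ x z * χ y z
  add_right : ∀ x y z : G, χ x (y + z) = χ x y * χ x z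
  bij : ∀ ψ : G → ℂˣ, (∀ y z : G, ψ (y + z) = ψ y * ψ z) → ∃! x : G, χ x = ψ

namespace Duality

variable {G : Type*} [AddCommGroup G]

lemma zero_left (M : Duality G) (z : G) : M.χ 0 z = 1 := by
  have h := M.add_left 0 0 z
  rw [add_zero] at h
  exact left_eq_mul.mp h

lemma zero_right (M : Duality G) (z : G) : M.χ z 0 = 1 := by
  have h := M.add_right z 0 0
  rw [add_zero] at h
  exact left_eq_mul.mp h

lemma neg_left (M : Duality G) (x z : G) : M.χ (-x) z = (M.χ x z)⁻¹ := by
  have h := M.add_left x (-x) z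
  rw [add_neg_cancel, M.zero_left] at h
  exact (inv_eq_of_mul_eq_one_right h.symm).symm

lemma neg_right (M : Duality G) (x z : G) : M.χ z (-x) = (M.χ z x)⁻¹ := by
  have h := M.add_right z x (-x)
  rw [add_neg_cancel, M.zero_right] at h
  exact (inv_eq_of_mul_eq_one_right h.symm).symm

/-- The `M`-dual of an additive code `C ≤ G^n`:
`C^M = {x : ∏ i, χ_{x i}(c i) = 1 for all c ∈ C}`. -/
def dualCode {n : ℕ} (M : Duality G) (C : AddSubgroup (Fin n → G)) :
    AddSubgroup (Fin n → G) where
  carrier := {x | ∀ c ∈ C, ∏ i, M.χ (x i) (c i) = 1}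
  zero_mem' := by
    intro c _
    simp [Duality.zero_left]
  add_mem' := by
    intro a b ha hb c hc
    have h : ∏ i, M.χ ((a + b) i) (c i)
        = (∏ i, M.χ (a i) (c i)) * ∏ i, M.χ (b i) (c i) := by
      rw [← Finset.prod_mul_distrib]
      exact Finset.prod_congr rfl fun i _ => M.add_left (a i) (b i) (c i)
    rw [h, ha c hc, hb c hc, mul_one]
  neg_mem' := by
    intro a ha c hc
    have h : ∏ i, M.χ ((-a) i) (c i) = (∏ i, M.χ (a i) (c i))⁻¹ := by
      rw [← Finset.prod_inv_distrib]
      exact Finset.prod_congr rfl fun i _ => M.neg_left (a i) (c i)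
    rw [h, ha c hc, inv_one]

/-- The `Mᵀ`-dual of an additive code `C ≤ G^n`, for the transpose duality
`χ'_x(y) = χ_y(x)`: `C^{Mᵀ} = {x : ∏ i, χ_{c i}(x i) = 1 for all c ∈ C}`. -/
def dualTCode {n : ℕ} (M : Duality G) (C : AddSubgroup (Fin n → G)) :
    AddSubgroup (Fin n → G) where
  carrier := {x | ∀ c ∈ C, ∏ i, M.χ (c i) (x i) = 1}
  zero_mem' := by
    intro c _
    simp [Duality.zero_right]
  add_mem' := by
    intro a b ha hb d hd
    have h : ∏ i, M.χ (d i) ((a + b) i)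
        = (∏ i, M.χ (d i) (a i)) * ∏ i, M.χ (d i) (b i) := by
      rw [← Finset.prod_mul_distrib]
      exact Finset.prod_congr rfl fun i _ => M.add_right (d i) (a i) (b i)
    rw [h, ha d hd, hb d hd, mul_one]
  neg_mem' := by
    intro a ha d hd
    have h : ∏ i, M.χ (d i) ((-a) i) = (∏ i, M.χ (d i) (a i))⁻¹ := by
      rw [← Finset.prod_inv_distrib]
      exact Finset.prod_congr rfl fun i _ => M.neg_right (a i) (d i)
    rw [h, ha d hd, inv_one]

/-- The `M`-dual of a length-one additive code `C ≤ G`. -/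
def dualOne (M : Duality G) (C : AddSubgroup G) : AddSubgroup G where
  carrier := {y | ∀ c ∈ C, M.χ y c = 1}
  zero_mem' := by intro c _; exact M.zero_left c
  add_mem' := by
    intro a b ha hb c hc
    rw [M.add_left a b c, ha c hc, hb c hc, mul_one]
  neg_mem' := by
    intro a ha c hc
    rw [M.neg_left a c, ha c hc, inv_one]

/-- The character `χ` extended coordinatewise to vectors:
`χ_u(v) = ∏ i, χ_{u i}(v i)`. -/
def chiVec {n : ℕ} (M : Duality G) (u v : Fin n → G) : ℂˣ :=
  ∏ i, M.χ (u i) (v i)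

end Duality

/-!
View `(F, +)` as a vector space over `ZMod p`; every value `χ_x(z)` is then a `p`-th root of
unity, and `a ↦ χ_{a • x}(z)` is injective as soon as `χ_x(z) ≠ 1`. If some `χ_x(x) ≠ 1`, the
line spanned by `x` meets its dual trivially. Otherwise `χ` is alternating, hence
`χ_y(x) = χ_x(y)⁻¹`, and for any `x, y` with `χ_x(y) ≠ 1` (which exist by nondegeneracy) the
plane spanned by `x` and `y` meets its dual trivially. Both codes are proper because
`|F| = p ^ e > p ^ 2`.
-/

namespace Duality

open Submodule Module

variable {G : Type*} [AddCommGroup G] (M : Duality G)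

lemma nsmul_left (n : ℕ) (x z : G) : M.χ (n • x) z = M.χ x z ^ n := by
  induction n with
  | zero => simp [M.zero_left]
  | succ k ih => rw [succ_nsmul, M.add_left, ih, pow_succ]

lemma ne_zero_of_chi_ne_one {x y : G} (hxy : M.χ x y ≠ 1) : x ≠ 0 := by
  rintro rfl
  exact hxy (M.zero_left y)

lemma chi_injective : Function.Injective M.χ := fun _ y hxy =>
  (M.bij (M.χ y) (M.add_right y)).unique hxy rfl

lemma exists_chi_ne_one [Nontrivial G] : ∃ x y : G, M.χ x y ≠ 1 := by
  obtain ⟨x, hx⟩ := exists_ne (0 : G)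
  obtain ⟨y, hy⟩ := Function.ne_iff.mp (M.chi_injective.ne hx)
  exact ⟨x, y, by rwa [M.zero_left] at hy⟩

/-- Polarize `χ_{x+y}(x+y) = 1`. -/
lemma chi_swap (hdiag : ∀ u : G, M.χ u u = 1) (x y : G) : M.χ y x = (M.χ x y)⁻¹ := by
  have h := hdiag (x + y)
  rw [M.add_left, M.add_right, M.add_right, hdiag x, hdiag y, one_mul, mul_one] at h
  exact eq_inv_of_mul_eq_one_right h

section ElementaryAbelian

variable {p : ℕ} [Fact p.Prime] [Module (ZMod p) G]

lemma smul_left (a : ZMod p) (x z : G) : M.χ (a • x) z = M.χ x z ^ a.val := by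
  rw [← M.nsmul_left, ← Nat.cast_smul_eq_nsmul (ZMod p), ZMod.natCast_zmod_val]

lemma chi_pow_char (x z : G) : M.χ x z ^ p = 1 := by
  rw [← M.nsmul_left, ← Nat.cast_smul_eq_nsmul (ZMod p), ZMod.natCast_self, zero_smul,
    M.zero_left]

/-- A nontrivial value `χ_x(z)` is a primitive `p`-th root of unity. -/
lemma eq_zero_of_chi_smul_eq_one {a : ZMod p} {x z : G} (hxz : M.χ x z ≠ 1)
    (h : M.χ (a • x) z = 1) : a = 0 := by
  rw [M.smul_left] at h
  rw [← ZMod.natCast_zmod_val a, ZMod.natCast_eq_zero_iff]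
  have hdvd := orderOf_dvd_of_pow_eq_one h
  rwa [orderOf_eq_prime (M.chi_pow_char (p := p) x z) hxz] at hdvd

lemma inf_dualOne_span_singleton_eq_bot {x : G} (hx : M.χ x x ≠ 1) :
    (span (ZMod p) {x}).toAddSubgroup ⊓ M.dualOne (span (ZMod p) {x}).toAddSubgroup = ⊥ := by
  refine eq_bot_iff.mpr fun z hz => ?_
  obtain ⟨hspan, hdual⟩ := AddSubgroup.mem_inf.mp hz
  obtain ⟨a, rfl⟩ := mem_span_singleton.mp hspan
  rw [M.eq_zero_of_chi_smul_eq_one hx (hdual x (mem_span_singleton_self x)), zero_smul]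
  exact zero_mem _

lemma inf_dualOne_span_pair_eq_bot (hdiag : ∀ u : G, M.χ u u = 1) {x y : G}
    (hxy : M.χ x y ≠ 1) :
    (span (ZMod p) {x, y}).toAddSubgroup ⊓ M.dualOne (span (ZMod p) {x, y}).toAddSubgroup
      = ⊥ := by
  have hyx : M.χ y x ≠ 1 := by
    rw [M.chi_swap hdiag]
    exact inv_ne_one.mpr hxy
  have hself (a : ZMod p) (u : G) : M.χ (a • u) u = 1 := by rw [M.smul_left, hdiag, one_pow]
  refine eq_bot_iff.mpr fun z hz => ?_
  obtain ⟨hspan, hdual⟩ := AddSubgroup.mem_inf.mp hz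
  obtain ⟨a, b, rfl⟩ := mem_span_pair.mp hspan
  have hdual_y := hdual y (subset_span (by simp))
  have hdual_x := hdual x (subset_span (by simp))
  rw [M.add_left, hself, mul_one] at hdual_y
  rw [M.add_left, hself, one_mul] at hdual_x
  rw [M.eq_zero_of_chi_smul_eq_one hxy hdual_y, M.eq_zero_of_chi_smul_eq_one hyx hdual_x,
    zero_smul, zero_smul, add_zero]
  exact zero_mem _

lemma span_toAddSubgroup_ne_bot {R : Type*} [Ring R] [Module R G] {s : Set G} {x : G}
    (hxs : x ∈ s) (hx : x ≠ 0) : (span R s).toAddSubgroup ≠ ⊥ := by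
  rw [Ne, ← bot_toAddSubgroup (R := R), toAddSubgroup_inj, span_eq_bot]
  exact fun h => hx (h x hxs)

lemma span_ne_top_of_card_lt [Finite G] {s : Finset G} {k : ℕ} (hs : s.card ≤ k)
    (hG : p ^ k < Nat.card G) : span (ZMod p) (s : Set G) ≠ ⊤ := by
  intro htop
  have hrank : finrank (ZMod p) G ≤ k := by
    have := finrank_span_finset_le_card (R := ZMod p) s
    rw [Set.finrank, htop, finrank_top] at this
    omega
  rw [natCard_eq_pow_finrank (K := ZMod p), Nat.card_zmod] at hG
  exact hG.not_ge (Nat.pow_le_pow_right (Fact.out : p.Prime).pos hrank)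

theorem exists_ne_bot_ne_top_inf_dualOne_eq_bot [Finite G] (hG : p ^ 2 < Nat.card G) :
    ∃ C : AddSubgroup G, C ≠ ⊥ ∧ C ≠ ⊤ ∧ C ⊓ M.dualOne C = ⊥ := by
  classical
  have hp := (Fact.out : p.Prime).one_lt
  by_cases hdiag : ∃ x, M.χ x x ≠ 1
  · obtain ⟨x, hx⟩ := hdiag
    have hG' : p ^ 1 < Nat.card G := (Nat.pow_lt_pow_right hp one_lt_two).trans hG
    refine ⟨_, span_toAddSubgroup_ne_bot (Set.mem_singleton x) (M.ne_zero_of_chi_ne_one hx), ?_,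
      M.inf_dualOne_span_singleton_eq_bot (p := p) hx⟩
    simpa using span_ne_top_of_card_lt (p := p) (s := {x}) le_rfl hG'
  · push Not at hdiag
    have : Nontrivial G :=
      Finite.one_lt_card_iff_nontrivial.mp ((Nat.one_lt_pow two_ne_zero hp).trans hG)
    obtain ⟨x, y, hxy⟩ := M.exists_chi_ne_one
    refine ⟨_, span_toAddSubgroup_ne_bot (Set.mem_insert x {y}) (M.ne_zero_of_chi_ne_one hxy), ?_,
      M.inf_dualOne_span_pair_eq_bot (p := p) hdiag hxy⟩
    simpa using span_ne_top_of_card_lt (p := p) (s := {x, y}) Finset.card_le_two hG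

end ElementaryAbelian

end Duality

/-- For any prime `p`, `e > 2`, and any duality `M` on `(F_{p^e}, +)`,
there exists a nontrivial ACD code of length one. -/
theorem exists_nontrivial_acd_length_one (p e : ℕ) (hp : p.Prime) (he : 2 < e)
    {F : Type*} [Field F] [Fintype F] (hcard : Fintype.card F = p ^ e)
    (M : Duality F) :
    ∃ C : AddSubgroup F, C ≠ ⊥ ∧ C ≠ ⊤ ∧ C ⊓ M.dualOne C = ⊥ := by
  have : Fact p.Prime := ⟨hp⟩
  have : CharP F p := charP_of_card_eq_prime_pow hcard
  let : Algebra (ZMod p) F := ZMod.algebra F p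
  refine M.exists_ne_bot_ne_top_inf_dualOne_eq_bot (p := p) ?_
  rw [Nat.card_eq_fintype_card, hcard]
  exact Nat.pow_lt_pow_right hp.one_lt he
end

section
/- Let M be a duality on (F_{p^{2e}}, +) with χ_x(x) = 1 for all x (a skew-symmetric duality). If C ≤ F_{p^{2e}}^n is an ACD code (C ∩ C^M = {0}) generated over F_p by m F_p-linearly independent rows of a generator matrix, then m is even. -/
/-!
Since `F` has characteristic `p`, every value `χ_u(w)` of the coordinatewise pairing is a `p`-th
root of unity, so the Gram matrix of the rows is `ξ ^ K` for a matrix `K` over `ZMod p`.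
Skew-symmetry of `M` makes `K` alternating. If `m` were odd, `K` would be singular, and a nonzero
`v` with `v K = 0` gives the codeword `∑ vᵢ • rowsᵢ`, nonzero by independence, which pairs
trivially with every row and so lies in `C ∩ C^M`.
-/

theorem AddChar.map_sum_eq_prod {ι A M : Type*} [AddCommMonoid A] [CommMonoid M]
    (ψ : AddChar A M) (s : Finset ι) (f : ι → A) :
    ψ (∑ i ∈ s, f i) = ∏ i ∈ s, ψ (f i) := by
  induction s using Finset.cons_induction <;> simp [*, map_add_eq_mul]

theorem ZMod.exists_stdAddChar_eq {N : ℕ} [NeZero N] {u : ℂˣ} (hu : u ^ N = 1) :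
    ∃ a : ZMod N, ZMod.stdAddChar a = u := by
  obtain ⟨i, -, hi⟩ := (Complex.mem_rootsOfUnity N u).1 ((mem_rootsOfUnity N u).2 hu)
  refine ⟨i, ?_⟩
  rw [← hi, ← Int.cast_natCast, ZMod.stdAddChar_coe, mul_div_assoc, Int.cast_natCast]

namespace Matrix

open MvPolynomial

theorem det_eq_zero_of_transpose_eq_neg {n R : Type*} [Fintype n] [DecidableEq n] [CommRing R]
    [IsAddTorsionFree R] {K : Matrix n n R} (hK : Kᵀ = -K) (hn : Odd (Fintype.card n)) :
    K.det = 0 := by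
  refine self_eq_neg.1 ?_
  conv_lhs => rw [← det_transpose, hK, det_neg, hn.neg_one_pow, neg_one_mul]

/-- Every alternating matrix over a commutative ring is a specialization of this one; over `ℤ[X]`
`det = -det` forces `det = 0`, which is how characteristic `2` is handled. -/
noncomputable def genericAlternating (n : Type*) [LinearOrder n] :
    Matrix n n (MvPolynomial (n × n) ℤ) :=
  fun i j => if i < j then X (i, j) else if j < i then -X (j, i) else 0

variable {n : Type*} [LinearOrder n]

theorem genericAlternating_transpose : (genericAlternating n)ᵀ = -genericAlternating n := by
  ext i j
  rcases lt_trichotomy i j with h | rfl | h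
  · simp [genericAlternating, h, h.not_gt]
  · simp [genericAlternating]
  · simp [genericAlternating, h, h.not_gt]

theorem map_genericAlternating {R : Type*} [CommRing R] {K : Matrix n n R} (hK : Kᵀ = -K)
    (hdiag : ∀ i, K i i = 0) : (genericAlternating n).map (aeval fun q => K q.1 q.2) = K := by
  ext i j
  have hji : K j i = -K i j := by rw [← transpose_apply K, hK, neg_apply]
  rcases lt_trichotomy i j with h | rfl | h
  · simp [genericAlternating, h]
  · simp [genericAlternating, hdiag]
  · simp [genericAlternating, h, h.not_gt, hji]

theorem det_eq_zero_of_alternating_of_odd [Fintype n] {R : Type*} [CommRing R]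
    {K : Matrix n n R} (hK : Kᵀ = -K) (hdiag : ∀ i, K i i = 0) (hn : Odd (Fintype.card n)) :
    K.det = 0 := by
  have h := AlgHom.map_det (aeval fun q : n × n => K q.1 q.2) (genericAlternating n)
  rwa [det_eq_zero_of_transpose_eq_neg genericAlternating_transpose hn, map_zero,
    AlgHom.mapMatrix_apply, map_genericAlternating hK hdiag, eq_comm] at h

end Matrix

namespace Duality

variable {G : Type*} [AddCommGroup G] (M : Duality G) (n : ℕ)

def chiVecChar : AddChar (Fin n → G) (AddChar (Fin n → G) ℂˣ) where
  toFun u :=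
    { toFun := M.chiVec u
      map_zero_eq_one' := Finset.prod_eq_one fun i _ => M.zero_right (u i)
      map_add_eq_mul' v w := by
        simp only [chiVec, Pi.add_apply, M.add_right, Finset.prod_mul_distrib] }
  map_zero_eq_one' := by
    ext w : 1
    show M.chiVec 0 w = 1
    exact Finset.prod_eq_one fun i _ => M.zero_left (w i)
  map_add_eq_mul' u v := by
    ext w : 1
    show M.chiVec (u + v) w = M.chiVec u w * M.chiVec v w
    simp only [chiVec, Pi.add_apply, M.add_left, Finset.prod_mul_distrib]

@[simp]
theorem chiVecChar_apply (u w : Fin n → G) : M.chiVecChar n u w = M.chiVec u w := rfl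

variable {M n}

theorem mem_dualCode_closure_iff {s : Set (Fin n → G)} {x : Fin n → G} :
    x ∈ M.dualCode (AddSubgroup.closure s) ↔ ∀ c ∈ s, M.chiVec x c = 1 := by
  refine ⟨fun h c hc => h c (AddSubgroup.subset_closure hc), fun h c hc => ?_⟩
  change M.chiVecChar n x c = 1
  induction hc using AddSubgroup.closure_induction with
  | mem c hc => exact h c hc
  | zero => exact AddChar.map_zero_eq_one _
  | add a b _ _ ha hb => rw [AddChar.map_add_eq_mul, ha, hb, mul_one]
  | neg a _ ha => rw [AddChar.map_neg_eq_inv, ha, inv_one]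

end Duality

section Pairing

open Matrix

variable {A ι : Type*} [AddCommGroup A] {p : ℕ} (B : AddChar A (AddChar A ℂˣ))

theorem exists_matrix_stdAddChar_eq [NeZero p] (htors : ∀ a : A, p • a = 0) (r : ι → A) :
    ∃ K : Matrix ι ι (ZMod p), ∀ i j, ZMod.stdAddChar (K i j) = B (r i) (r j) := by
  have hroot : ∀ a b : A, B a b ^ p = 1 := fun a b => by
    rw [← AddChar.pow_apply, ← AddChar.map_nsmul_eq_pow, htors, AddChar.map_zero_eq_one,
      AddChar.one_apply]
  choose K hK using fun i j => ZMod.exists_stdAddChar_eq (hroot (r i) (r j))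
  exact ⟨K, hK⟩

theorem stdAddChar_vecMul_eq [Fintype ι] [NeZero p] {r : ι → A} {K : Matrix ι ι (ZMod p)}
    (hK : ∀ i j, ZMod.stdAddChar (K i j) = B (r i) (r j)) (v : ι → ZMod p) (j : ι) :
    ZMod.stdAddChar ((v ᵥ* K) j) = B (∑ i, (v i).val • r i) (r j) := by
  calc ZMod.stdAddChar ((v ᵥ* K) j) = ZMod.stdAddChar (∑ i, (v i).val • K i j) := by
        simp [Matrix.vecMul, dotProduct]
    _ = ∏ i, ((B (r i) (r j) : ℂˣ) : ℂ) ^ (v i).val := by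
        rw [AddChar.map_sum_eq_prod]
        simp only [AddChar.map_nsmul_eq_pow, hK]
    _ = B (∑ i, (v i).val • r i) (r j) := by
        simp [AddChar.map_sum_eq_prod, AddChar.prod_apply, AddChar.map_nsmul_eq_pow]

theorem exists_ne_zero_forall_pairing_eq_one_of_odd [Fintype ι] [LinearOrder ι] [Fact p.Prime]
    (htors : ∀ a : A, p • a = 0) (halt : ∀ a, B a a = 1) (hι : Odd (Fintype.card ι))
    (r : ι → A) :
    ∃ v : ι → ZMod p, v ≠ 0 ∧ ∀ j, B (∑ i, (v i).val • r i) (r j) = 1 := by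
  obtain ⟨K, hK⟩ := exists_matrix_stdAddChar_eq B htors r
  have hswap : ∀ a b, B a b * B b a = 1 := fun a b => by
    simpa [AddChar.map_add_eq_mul, halt, mul_mul_mul_comm, mul_comm] using halt (a + b)
  have hdiag : ∀ i, K i i = 0 := fun i => ZMod.injective_stdAddChar <| by
    rw [hK, halt, AddChar.map_zero_eq_one, Units.val_one]
  have hKt : Kᵀ = -K := by
    ext i j
    refine eq_neg_of_add_eq_zero_left (ZMod.injective_stdAddChar ?_)
    rw [AddChar.map_add_eq_mul, transpose_apply, hK, hK, ← Units.val_mul, hswap, Units.val_one,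
      AddChar.map_zero_eq_one]
  obtain ⟨v, hv, hvK⟩ :=
    exists_vecMul_eq_zero_iff.2 (det_eq_zero_of_alternating_of_odd hKt hdiag hι)
  refine ⟨v, hv, fun j => Units.val_eq_one.1 ?_⟩
  rw [← stdAddChar_vecMul_eq B hK, hvK, Pi.zero_apply, AddChar.map_zero_eq_one]

end Pairing

/-- Over a skew-symmetric duality on `(F_{p^{2e}}, +)`, an ACD code
generated by `m` linearly independent rows over `F_p` has `m` even. -/
theorem acd_skewSymmetric_even_generators (p e m n : ℕ) (hp : p.Prime)
    {F : Type*} [Field F] [Fintype F] (hcard : Fintype.card F = p ^ (2 * e))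
    (M : Duality F) (hskew : ∀ x : F, M.χ x x = 1)
    (rows : Fin m → (Fin n → F))
    (hli : ∀ c : Fin m → ZMod p, (∑ i, (c i).val • rows i) = 0 → c = 0)
    (hACD : AddSubgroup.closure (Set.range rows) ⊓
        M.dualCode (AddSubgroup.closure (Set.range rows)) = ⊥) :
    Even m := by
  have := Fact.mk hp
  have : CharP F p := charP_of_card_eq_prime_pow hcard
  by_contra hm
  obtain ⟨v, hv, hx⟩ := exists_ne_zero_forall_pairing_eq_one_of_odd (p := p) (M.chiVecChar n)
    (fun a => funext fun i => by simp [nsmul_eq_mul])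
    (fun a => (M.chiVecChar_apply n a a).trans (Finset.prod_eq_one fun i _ => hskew (a i)))
    (by simpa using Nat.not_even_iff_odd.1 hm) rows
  have hxC : ∑ i, (v i).val • rows i ∈ AddSubgroup.closure (Set.range rows) :=
    AddSubgroup.sum_mem _ fun i _ =>
      AddSubgroup.nsmul_mem _ (AddSubgroup.subset_closure (Set.mem_range_self i)) _
  have hxD : ∑ i, (v i).val • rows i ∈ M.dualCode (AddSubgroup.closure (Set.range rows)) :=
    Duality.mem_dualCode_closure_iff.2 (by rintro _ ⟨j, rfl⟩; exact hx j)
  have hx0 := hACD ▸ AddSubgroup.mem_inf.2 ⟨hxC, hxD⟩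
  exact hv (hli v (AddSubgroup.mem_bot.1 hx0))
end
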